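/- For the complex number ξ(ε) = (1+g)² − 2ihg with g = (cos 4ε − 1)/4 and h = sin(4ε)/4, one has |ξ(ε)| ≤ 1 for all ε, with equality iff g(ε) = 0; hence the series Σ_{T≥1} Re(ξ^{T−1}) converges absolutely whenever g(ε) ≠ 0. -/

import Mathlib

/-!
With `h² = −g/2 − g²` (from `sin² + cos² = 1`) the squared modulus collapses to a polynomial in
`g` alone, `|ξ|² = 1 + g (4 + 6g + 2g² − 3g³)`, whose second factor is positive on the range
`[−1/2, 0]` of `g`. Hence `|ξ| < 1` unless `g = 0`, and then `|Re ξᵀ| ≤ |ξ|ᵀ` is dominated by a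
convergent geometric series.
-/

open Complex

lemma normSq_one_add_sq_sub_two_I_mul (g h : ℝ) :
    normSq ((1 + (g : ℂ)) ^ 2 - 2 * I * (h : ℂ) * (g : ℂ)) = (1 + g) ^ 4 + 4 * h ^ 2 * g ^ 2 := by
  simp only [normSq_apply, sub_re, sub_im, mul_re, mul_im, pow_two, add_re, add_im, one_re,
    one_im, ofReal_re, ofReal_im, I_re, I_im, re_ofNat, im_ofNat]
  ring

lemma sin_div_four_sq (x : ℝ) :
    (Real.sin x / 4) ^ 2 = -((Real.cos x - 1) / 4) / 2 - ((Real.cos x - 1) / 4) ^ 2 := by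
  nlinarith [Real.sin_sq_add_cos_sq x]

lemma cos_sub_one_div_four_mem_Icc (x : ℝ) : (Real.cos x - 1) / 4 ∈ Set.Icc (-1 / 2 : ℝ) 0 := by
  constructor <;> linarith [Real.neg_one_le_cos x, Real.cos_le_one x]

lemma sq_norm_eq_one_add_mul_of_sq_eq {g h : ℝ} (hh : h ^ 2 = -g / 2 - g ^ 2) :
    ‖(1 + (g : ℂ)) ^ 2 - 2 * I * (h : ℂ) * (g : ℂ)‖ ^ 2
      = 1 + g * (4 + 6 * g + 2 * g ^ 2 - 3 * g ^ 3) := by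
  rw [Complex.sq_norm, normSq_one_add_sq_sub_two_I_mul, hh]
  ring

lemma cubic_pos_of_mem_Icc {g : ℝ} (hg : g ∈ Set.Icc (-1 / 2 : ℝ) 0) :
    0 < 4 + 6 * g + 2 * g ^ 2 - 3 * g ^ 3 := by
  obtain ⟨hlo, hhi⟩ := hg
  nlinarith [sq_nonneg g, mul_nonpos_iff.2 (Or.inr ⟨hhi, sq_nonneg g⟩)]

lemma summable_abs_re_pow {z : ℂ} (hz : ‖z‖ < 1) : Summable fun n : ℕ => |(z ^ n).re| :=
  (summable_geometric_of_lt_one (norm_nonneg z) hz).of_nonneg_of_le (fun _ => abs_nonneg _)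
    fun n => (abs_re_le_norm _).trans (norm_pow z n).le

/-- For `ξ(ε) = (1+g)² − 2ihg` with `g = (cos 4ε − 1)/4` and `h = sin(4ε)/4`,
one has `|ξ(ε)| ≤ 1`, with equality iff `g(ε) = 0`; hence the series
`Σ_{T≥1} Re(ξ^{T−1})` converges absolutely whenever `g(ε) ≠ 0`. -/
theorem stmt_13 (ε : ℝ) :
    letI g : ℝ := (Real.cos (4 * ε) - 1) / 4
    letI h : ℝ := Real.sin (4 * ε) / 4
    letI ξ : ℂ := (1 + (g : ℂ)) ^ 2 - 2 * Complex.I * (h : ℂ) * (g : ℂ)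
    ‖ξ‖ ≤ 1 ∧
    (‖ξ‖ = 1 ↔ g = 0) ∧
    (g ≠ 0 → Summable fun T : ℕ => |(ξ ^ T).re|) := by
  set g : ℝ := (Real.cos (4 * ε) - 1) / 4
  set ξ : ℂ := (1 + (g : ℂ)) ^ 2 - 2 * Complex.I * (Real.sin (4 * ε) / 4 : ℝ) * (g : ℂ)
  have hg : g ∈ Set.Icc (-1 / 2 : ℝ) 0 := cos_sub_one_div_four_mem_Icc _
  set q := 4 + 6 * g + 2 * g ^ 2 - 3 * g ^ 3
  have hq : 0 < q := cubic_pos_of_mem_Icc hg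
  have hsq : ‖ξ‖ ^ 2 = 1 + g * q := sq_norm_eq_one_add_mul_of_sq_eq (sin_div_four_sq _)
  have hnorm := norm_nonneg ξ
  refine ⟨?_, ?_, fun hg0 => summable_abs_re_pow ?_⟩
  · rw [← sq_le_one_iff₀ hnorm, hsq]
    nlinarith [hg.2]
  · rw [← pow_eq_one_iff_of_nonneg hnorm two_ne_zero, hsq, add_eq_left, mul_eq_zero,
      or_iff_left hq.ne']
  · rw [← sq_lt_one_iff₀ hnorm, hsq]
    nlinarith [lt_of_le_of_ne hg.2 hg0]
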